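/- arXiv:1401.2651 — 2 statements merged into one kernel-verified Lean document; each statement's English description precedes it below -/
import Mathlib

section
/- Microscopic one-offspring Schema Theorem bound. In the one-generation genetic algorithm model (fitness-proportional selection of two independent parents; with probability p_c one-point crossover at a cut point k uniform in {1,…,ℓ−1}, the offspring taking positions < k from the first parent and positions ≥ k from the second, otherwise a copy of the first parent; then independent per-bit mutation with probability p_m), for every schema H with at least one fixed position, the probability that a single offspring matches H is at least p(H,t) · (1 − p_c·d(H)/(ℓ−1)) · (1 − p_m)^{o(H)}, where p(H,t) is the probability that a fitness-proportionally selected individual matches H. -/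
/-- A bit string `A : Fin ℓ → Bool` matches (is an instance of) a schema
`H : Fin ℓ → Option Bool` if it agrees with `H` on every fixed position. -/
def SchemaMatches {ℓ : ℕ} (A : Fin ℓ → Bool) (H : Fin ℓ → Option Bool) : Prop :=
  ∀ i : Fin ℓ, ∀ b : Bool, H i = some b → A i = b

instance {ℓ : ℕ} (A : Fin ℓ → Bool) (H : Fin ℓ → Option Bool) :
    Decidable (SchemaMatches A H) :=
  inferInstanceAs (Decidable (∀ i : Fin ℓ, ∀ b : Bool, H i = some b → A i = b))

/-- The fixed positions of a schema: indices where `H` is not `∗`. -/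
def fixedPos {ℓ : ℕ} (H : Fin ℓ → Option Bool) : Finset (Fin ℓ) :=
  Finset.univ.filter (fun i => H i ≠ none)

/-- The order `o(H)`: the number of fixed positions. -/
def schemaOrder {ℓ : ℕ} (H : Fin ℓ → Option Bool) : ℕ := (fixedPos H).card

/-- The defining length `d(H)`: distance between the last and first fixed positions. -/
def defLength {ℓ : ℕ} (H : Fin ℓ → Option Bool) (h : (fixedPos H).Nonempty) : ℕ :=
  ((fixedPos H).max' h : ℕ) - ((fixedPos H).min' h : ℕ)
/-- Total fitness of the population. -/
def totalFit {ℓ n : ℕ} (P : Fin n → Fin ℓ → Bool) (f : (Fin ℓ → Bool) → ℝ) : ℝ :=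
  ∑ j, f (P j)

/-- Fitness-proportional selection probability of individual `j`. -/
noncomputable def selProb {ℓ n : ℕ} (P : Fin n → Fin ℓ → Bool)
    (f : (Fin ℓ → Bool) → ℝ) (j : Fin n) : ℝ :=
  f (P j) / totalFit P f

/-- The set of population members matching the schema `H`. -/
def matchSet {ℓ n : ℕ} (P : Fin n → Fin ℓ → Bool) (H : Fin ℓ → Option Bool) :
    Finset (Fin n) :=
  Finset.univ.filter (fun j => SchemaMatches (P j) H)

/-- `m(H,t)`: the number of population members matching `H`. -/
def mCount {ℓ n : ℕ} (P : Fin n → Fin ℓ → Bool) (H : Fin ℓ → Option Bool) : ℕ :=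
  (matchSet P H).card

/-- `f(H,t)`: the average fitness of the population members matching `H`
(`0` by convention if there are none, since `0/0 = 0` in Lean). -/
noncomputable def schemaFit {ℓ n : ℕ} (P : Fin n → Fin ℓ → Bool)
    (f : (Fin ℓ → Bool) → ℝ) (H : Fin ℓ → Option Bool) : ℝ :=
  (∑ j ∈ matchSet P H, f (P j)) / (mCount P H : ℝ)

/-- `f̄(t)`: the mean fitness of the population. -/
noncomputable def meanFit {ℓ n : ℕ} (P : Fin n → Fin ℓ → Bool)
    (f : (Fin ℓ → Bool) → ℝ) : ℝ :=
  totalFit P f / (n : ℝ)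

/-- `p(H,t)`: the probability that a fitness-proportionally selected individual
matches `H`. -/
noncomputable def pSel {ℓ n : ℕ} (P : Fin n → Fin ℓ → Bool)
    (f : (Fin ℓ → Bool) → ℝ) (H : Fin ℓ → Option Bool) : ℝ :=
  ∑ j ∈ matchSet P H, selProb P f j
/-- Apply a mutation mask `e` to a string `A`: the bit at `i` is flipped iff `e i = true`. -/
def mutate {ℓ : ℕ} (A e : Fin ℓ → Bool) : Fin ℓ → Bool :=
  fun i => Bool.xor (A i) (e i)

/-- The probability of the mutation mask `e` under independent per-bit mutation
with probability `p_m`. -/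
def mutWeight {ℓ : ℕ} (p_m : ℝ) (e : Fin ℓ → Bool) : ℝ :=
  ∏ i, if e i then p_m else 1 - p_m
/-- The random choices used to create one offspring: two parent indices, an optional
crossover cut (`some k` meaning the cut point `k+1 ∈ {1,…,ℓ-1}`, `none` meaning no
crossover), and a mutation mask. -/
abbrev GAChoice (ℓ n : ℕ) : Type :=
  Fin n × Fin n × Option (Fin (ℓ - 1)) × (Fin ℓ → Bool)

/-- The probability of an elementary choice: the parents are selected independently by
fitness-proportional selection, crossover happens with probability `p_c` with a cut point
uniform in `{1,…,ℓ-1}`, and the mutation mask has its independent per-bit probability. -/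
noncomputable def gaWeight {ℓ n : ℕ} (P : Fin n → Fin ℓ → Bool)
    (f : (Fin ℓ → Bool) → ℝ) (p_c p_m : ℝ) (x : GAChoice ℓ n) : ℝ :=
  selProb P f x.1 * selProb P f x.2.1 *
    (match x.2.2.1 with
      | none => 1 - p_c
      | some _ => p_c / ((ℓ : ℝ) - 1)) *
    mutWeight p_m x.2.2.2

/-- The offspring produced by an elementary choice: with no crossover, a copy of the
first parent; with a cut at `k = x.2.2.1+1`, the bits at positions `< k` come from the
first parent and those at positions `≥ k` from the second; finally the mutation mask
is applied. -/
def gaOffspring {ℓ n : ℕ} (P : Fin n → Fin ℓ → Bool) (x : GAChoice ℓ n) :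
    Fin ℓ → Bool :=
  mutate
    (match x.2.2.1 with
      | none => P x.1
      | some k => fun i => if (i : ℕ) < (k : ℕ) + 1 then P x.1 i else P x.2.1 i)
    x.2.2.2

/-- The probability that a single newly created offspring matches `H`. -/
noncomputable def matchProb {ℓ n : ℕ} (P : Fin n → Fin ℓ → Bool)
    (f : (Fin ℓ → Bool) → ℝ) (p_c p_m : ℝ) (H : Fin ℓ → Option Bool) : ℝ :=
  ∑ x : GAChoice ℓ n,
    gaWeight P f p_c p_m x * (if SchemaMatches (gaOffspring P x) H then 1 else 0)

/-- `E(m(H,t+1))`: the expected number of offspring matching `H` when the `n` offspring of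
generation `t+1` are created independently, computed over the product space of all the
random choices. -/
noncomputable def expCount {ℓ n : ℕ} (P : Fin n → Fin ℓ → Bool)
    (f : (Fin ℓ → Bool) → ℝ) (p_c p_m : ℝ) (H : Fin ℓ → Option Bool) : ℝ :=
  ∑ ω : Fin n → GAChoice ℓ n,
    (∏ i, gaWeight P f p_c p_m (ω i)) *
      ((Finset.univ.filter (fun i : Fin n => SchemaMatches (gaOffspring P (ω i)) H)).card : ℝ)

/-! An offspring surely matches `H` if mutation leaves every fixed position alone, which has
probability `(1 - p_m) ^ o(H)` independently of everything else, and the result of crossover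
matches `H`. The latter is guaranteed when there is no crossover and the first parent matches,
when the cut lies after the last fixed position `b` and the first parent matches, or when it
lies before the first fixed position `a` and the second parent matches. Both parents are
distributed like a fitness-proportional selection, so these disjoint events have probability
`p(H,t) · (1 - p_c + p_c (ℓ - 1 - b) / (ℓ - 1) + p_c a / (ℓ - 1))`,
which is `p(H,t) · (1 - p_c d(H) / (ℓ - 1))`.
-/

open Finset

section SchemaBound

variable {ℓ n : ℕ}

noncomputable def matchIndicator (H : Fin ℓ → Option Bool) (A : Fin ℓ → Bool) : ℝ :=
  if SchemaMatches A H then 1 else 0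

lemma matchIndicator_nonneg (H : Fin ℓ → Option Bool) (A : Fin ℓ → Bool) :
    0 ≤ matchIndicator H A := by
  unfold matchIndicator; split <;> norm_num

lemma matchIndicator_mono {H : Fin ℓ → Option Bool} {A B : Fin ℓ → Bool}
    (h : SchemaMatches A H → SchemaMatches B H) : matchIndicator H A ≤ matchIndicator H B := by
  unfold matchIndicator
  split_ifs with hA hB
  · exact le_rfl
  · exact absurd (h hA) hB
  · exact zero_le_one
  · exact le_rfl

lemma mem_fixedPos_of_eq_some {H : Fin ℓ → Option Bool} {i : Fin ℓ} {b : Bool}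
    (h : H i = some b) : i ∈ fixedPos H := by
  simp [fixedPos, h]

lemma SchemaMatches.mutate {A e : Fin ℓ → Bool} {H : Fin ℓ → Option Bool}
    (hA : SchemaMatches A H) (he : ∀ i ∈ fixedPos H, e i = false) :
    SchemaMatches (mutate A e) H := by
  intro i b hi
  simp [_root_.mutate, he i (mem_fixedPos_of_eq_some hi), hA i b hi]

def crossover (A B : Fin ℓ → Bool) : Option (Fin (ℓ - 1)) → Fin ℓ → Bool
  | none => A
  | some k => fun i => if (i : ℕ) < (k : ℕ) + 1 then A i else B i

lemma gaOffspring_mk (P : Fin n → Fin ℓ → Bool) (j₁ j₂ : Fin n) (c : Option (Fin (ℓ - 1)))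
    (e : Fin ℓ → Bool) :
    gaOffspring P (j₁, j₂, c, e) = mutate (crossover (P j₁) (P j₂) c) e := by
  cases c <;> rfl

lemma SchemaMatches.crossover_of_le {A B : Fin ℓ → Bool} {H : Fin ℓ → Option Bool}
    {k : Fin (ℓ - 1)} (hA : SchemaMatches A H) (hk : ∀ i ∈ fixedPos H, (i : ℕ) ≤ k) :
    SchemaMatches (crossover A B (some k)) H := by
  intro i b hi
  have := hk i (mem_fixedPos_of_eq_some hi)
  simp only [crossover, if_pos (Nat.lt_succ_of_le this), hA i b hi]

lemma SchemaMatches.crossover_of_lt {A B : Fin ℓ → Bool} {H : Fin ℓ → Option Bool}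
    {k : Fin (ℓ - 1)} (hB : SchemaMatches B H) (hk : ∀ i ∈ fixedPos H, (k : ℕ) < i) :
    SchemaMatches (crossover A B (some k)) H := by
  intro i b hi
  have := hk i (mem_fixedPos_of_eq_some hi)
  simp only [crossover, if_neg (Nat.not_lt.mpr this), hB i b hi]

lemma mutWeight_nonneg {p_m : ℝ} (hpm : p_m ∈ Set.Icc (0 : ℝ) 1) (e : Fin ℓ → Bool) :
    0 ≤ mutWeight p_m e :=
  prod_nonneg fun i _ => by split <;> linarith [hpm.1, hpm.2]

lemma sum_mutWeight_mul_avoids (p_m : ℝ) (S : Finset (Fin ℓ)) :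
    ∑ e : Fin ℓ → Bool, mutWeight p_m e * (if ∀ i ∈ S, e i = false then 1 else 0) =
      (1 - p_m) ^ #S := by
  let g : Fin ℓ → Bool → ℝ := fun i b =>
    (if b then p_m else 1 - p_m) * if i ∈ S then (if b = false then 1 else 0) else 1
  have hg : ∀ e : Fin ℓ → Bool,
      mutWeight p_m e * (if ∀ i ∈ S, e i = false then 1 else 0) = ∏ i, g i (e i) := by
    intro e
    simp only [g, mutWeight, prod_mul_distrib, prod_ite_mem, univ_inter, prod_boole]
    -- the two sides differ only in the `Decidable` instance of `∀ i ∈ S, e i = false`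
    convert rfl
  have hsum : ∀ i, ∑ b, g i b = if i ∈ S then 1 - p_m else 1 := by
    intro i
    by_cases hi : i ∈ S <;> simp [g, hi]
  simp only [hg, ← Fintype.prod_sum, hsum, prod_ite_mem, univ_inter, prod_const]

section Selection

variable {P : Fin n → Fin ℓ → Bool} {f : (Fin ℓ → Bool) → ℝ}

lemma selProb_nonneg (hf : ∀ j, 0 ≤ f (P j)) (j : Fin n) : 0 ≤ selProb P f j :=
  div_nonneg (hf j) (sum_nonneg fun i _ => hf i)

lemma sum_selProb (hT : totalFit P f ≠ 0) : ∑ j, selProb P f j = 1 := by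
  simp only [selProb, ← sum_div]
  exact div_self hT

lemma pSel_eq_sum (H : Fin ℓ → Option Bool) :
    pSel P f H = ∑ j, selProb P f j * matchIndicator H (P j) := by
  simp only [pSel, matchSet, sum_filter, matchIndicator, mul_ite, mul_one, mul_zero]

end Selection

lemma sum_sum_mul_mul_add {ι : Type*} [Fintype ι] {s : ι → ℝ} (hs : ∑ i, s i = 1)
    (I : ι → ℝ) (α β : ℝ) :
    ∑ i, ∑ j, s i * s j * (α * I i + β * I j) = (α + β) * ∑ i, s i * I i := by
  calc ∑ i, ∑ j, s i * s j * (α * I i + β * I j)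
      = ∑ i, ∑ j, (α * (s i * I i) * s j + β * s i * (s j * I j)) :=
        sum_congr rfl fun i _ => sum_congr rfl fun j _ => by ring
    _ = α * (∑ i, s i * I i) * ∑ j, s j + β * (∑ i, s i) * ∑ j, s j * I j := by
        simp only [sum_add_distrib, ← mul_sum, ← sum_mul]
    _ = (α + β) * ∑ i, s i * I i := by rw [hs]; ring

lemma Fin.card_filter_le_val (m b : ℕ) : #{k : Fin m | b ≤ (k : ℕ)} = m - b := by
  have := card_filter_add_card_filter_not (s := (univ : Finset (Fin m)))
    fun k : Fin m => (k : ℕ) < b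
  simp only [not_lt, card_univ, Fintype.card_fin, Fin.card_filter_val_lt] at this
  omega

noncomputable def cutWeight (ℓ : ℕ) (p_c : ℝ) : Option (Fin (ℓ - 1)) → ℝ
  | none => 1 - p_c
  | some _ => p_c / ((ℓ : ℝ) - 1)

lemma cutWeight_nonneg {p_c : ℝ} (hpc : p_c ∈ Set.Icc (0 : ℝ) 1) (c : Option (Fin (ℓ - 1))) :
    0 ≤ cutWeight ℓ p_c c := by
  cases c with
  | none => exact sub_nonneg.mpr hpc.2
  | some k =>
    have : (1 : ℝ) < ℓ := by exact_mod_cast (show 1 < ℓ by have := k.isLt; omega)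
    exact div_nonneg hpc.1 (by linarith)

lemma gaWeight_mk (P : Fin n → Fin ℓ → Bool) (f : (Fin ℓ → Bool) → ℝ) (p_c p_m : ℝ)
    (j₁ j₂ : Fin n) (c : Option (Fin (ℓ - 1))) (e : Fin ℓ → Bool) :
    gaWeight P f p_c p_m (j₁, j₂, c, e) =
      selProb P f j₁ * selProb P f j₂ * cutWeight ℓ p_c c * mutWeight p_m e := by
  cases c <;> rfl

lemma gaWeight_nonneg {P : Fin n → Fin ℓ → Bool} {f : (Fin ℓ → Bool) → ℝ} {p_c p_m : ℝ}
    (hf : ∀ j, 0 ≤ f (P j)) (hpc : p_c ∈ Set.Icc (0 : ℝ) 1) (hpm : p_m ∈ Set.Icc (0 : ℝ) 1)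
    (x : GAChoice ℓ n) : 0 ≤ gaWeight P f p_c p_m x := by
  obtain ⟨j₁, j₂, c, e⟩ := x
  rw [gaWeight_mk]
  exact mul_nonneg (mul_nonneg (mul_nonneg (selProb_nonneg hf j₁) (selProb_nonneg hf j₂))
    (cutWeight_nonneg hpc c)) (mutWeight_nonneg hpm e)

lemma sum_gaWeight_mul_mul (P : Fin n → Fin ℓ → Bool) (f : (Fin ℓ → Bool) → ℝ) (p_c p_m : ℝ)
    (F : Fin n → Fin n → Option (Fin (ℓ - 1)) → ℝ) (G : (Fin ℓ → Bool) → ℝ) :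
    ∑ x : GAChoice ℓ n, gaWeight P f p_c p_m x * (F x.1 x.2.1 x.2.2.1 * G x.2.2.2) =
      (∑ j₁, ∑ j₂, selProb P f j₁ * selProb P f j₂ * ∑ c, cutWeight ℓ p_c c * F j₁ j₂ c) *
        ∑ e, mutWeight p_m e * G e := by
  simp only [Fintype.sum_prod_type, gaWeight_mk]
  rw [sum_mul]
  refine sum_congr rfl fun j₁ _ => ?_
  rw [sum_mul]
  refine sum_congr rfl fun j₂ _ => ?_
  rw [mul_assoc, sum_mul, mul_sum]
  refine sum_congr rfl fun c _ => ?_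
  simp only [mul_sum]
  exact sum_congr rfl fun e _ => by ring

section Survival

variable {H : Fin ℓ → Option Bool} (hfix : (fixedPos H).Nonempty)

noncomputable def survivalBound (A B : Fin ℓ → Bool) : Option (Fin (ℓ - 1)) → ℝ
  | none => matchIndicator H A
  | some k =>
    (if ((fixedPos H).max' hfix : ℕ) ≤ k then matchIndicator H A else 0) +
      (if (k : ℕ) < ((fixedPos H).min' hfix : ℕ) then matchIndicator H B else 0)

lemma survivalBound_le_matchIndicator (A B : Fin ℓ → Bool) (c : Option (Fin (ℓ - 1))) :
    survivalBound hfix A B c ≤ matchIndicator H (crossover A B c) := by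
  cases c with
  | none => exact le_rfl
  | some k =>
    have hmin := (fixedPos H).min'_le_max' hfix
    simp only [survivalBound]
    split_ifs with hb ha ha
    · exact absurd (hb.trans_lt ha) (not_lt.mpr (by exact_mod_cast hmin))
    · rw [add_zero]
      exact matchIndicator_mono fun hA => hA.crossover_of_le fun i hi =>
        le_trans (by exact_mod_cast (fixedPos H).le_max' i hi) hb
    · rw [zero_add]
      exact matchIndicator_mono fun hB => hB.crossover_of_lt fun i hi =>
        lt_of_lt_of_le ha (by exact_mod_cast (fixedPos H).min'_le i hi)
    · rw [add_zero]; exact matchIndicator_nonneg _ _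

lemma survivalBound_mul_avoids_le (A B : Fin ℓ → Bool) (c : Option (Fin (ℓ - 1)))
    (e : Fin ℓ → Bool) :
    survivalBound hfix A B c * (if ∀ i ∈ fixedPos H, e i = false then 1 else 0) ≤
      matchIndicator H (mutate (crossover A B c) e) := by
  split_ifs with he
  · rw [mul_one]
    exact (survivalBound_le_matchIndicator hfix A B c).trans
      (matchIndicator_mono fun h => h.mutate he)
  · rw [mul_zero]
    exact matchIndicator_nonneg _ _

lemma sum_cutWeight_mul_survivalBound (p_c : ℝ) (A B : Fin ℓ → Bool) :
    ∑ c, cutWeight ℓ p_c c * survivalBound hfix A B c =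
      (1 - p_c + p_c / ((ℓ : ℝ) - 1) * (ℓ - 1 - ((fixedPos H).max' hfix : ℕ))) *
          matchIndicator H A +
        p_c / ((ℓ : ℝ) - 1) * ((fixedPos H).min' hfix : ℕ) * matchIndicator H B := by
  simp only [Fintype.sum_option, cutWeight, survivalBound, mul_add, sum_add_distrib,
    ← sum_filter, ← mul_sum, sum_const, nsmul_eq_mul]
  set a : ℕ := ((fixedPos H).min' hfix : ℕ)
  set b : ℕ := ((fixedPos H).max' hfix : ℕ)
  have hab : a ≤ b := (fixedPos H).min'_le_max' hfix
  have hb : b + 1 ≤ ℓ := ((fixedPos H).max' hfix).isLt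
  have hcard_ge : ((#{k : Fin (ℓ - 1) | b ≤ (k : ℕ)} : ℕ) : ℝ) = ℓ - 1 - b := by
    rw [Fin.card_filter_le_val, Nat.cast_sub (by omega), Nat.cast_sub (by omega), Nat.cast_one]
  have hcard_lt : ((#{k : Fin (ℓ - 1) | (k : ℕ) < a} : ℕ) : ℝ) = a := by
    rw [Fin.card_filter_val_lt, min_eq_right (by omega)]
  rw [hcard_ge, hcard_lt]
  ring

end Survival

end SchemaBound

theorem microscopic_schema_bound_general {ℓ n : ℕ} (hℓ : 2 ≤ ℓ)
    (P : Fin n → Fin ℓ → Bool) (f : (Fin ℓ → Bool) → ℝ)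
    (hf : ∀ j : Fin n, 0 < f (P j))
    (p_c p_m : ℝ) (hpc : p_c ∈ Set.Icc (0 : ℝ) 1) (hpm : p_m ∈ Set.Icc (0 : ℝ) 1)
    (H : Fin ℓ → Option Bool) (hfix : (fixedPos H).Nonempty) :
    matchProb P f p_c p_m H ≥
      pSel P f H *
        (1 - p_c * (defLength H hfix : ℝ) / ((ℓ : ℝ) - 1)) *
        (1 - p_m) ^ schemaOrder H := by
  rcases n.eq_zero_or_pos with rfl | hn
  · simp [matchProb, pSel, matchSet]
  have hT : totalFit P f ≠ 0 :=
    (sum_pos (fun j _ => hf j) (univ_nonempty_iff.mpr ⟨⟨0, hn⟩⟩)).ne'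
  have hℓ' : (ℓ : ℝ) - 1 ≠ 0 := by
    have : (2 : ℝ) ≤ ℓ := by exact_mod_cast hℓ
    linarith
  have hmin_le_max : ((fixedPos H).min' hfix : ℕ) ≤ (fixedPos H).max' hfix :=
    (fixedPos H).min'_le_max' hfix
  calc pSel P f H * (1 - p_c * (defLength H hfix : ℝ) / ((ℓ : ℝ) - 1)) *
        (1 - p_m) ^ schemaOrder H
      = (∑ j₁, ∑ j₂, selProb P f j₁ * selProb P f j₂ *
            ∑ c, cutWeight ℓ p_c c * survivalBound hfix (P j₁) (P j₂) c) *
          ∑ e, mutWeight p_m e * (if ∀ i ∈ fixedPos H, e i = false then 1 else 0) := by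
        rw [sum_mutWeight_mul_avoids, schemaOrder]
        simp only [sum_cutWeight_mul_survivalBound, sum_sum_mul_mul_add (sum_selProb hT),
          ← pSel_eq_sum, defLength, Nat.cast_sub hmin_le_max]
        field_simp
        ring
    _ = ∑ x : GAChoice ℓ n, gaWeight P f p_c p_m x *
          (survivalBound hfix (P x.1) (P x.2.1) x.2.2.1 *
            if ∀ i ∈ fixedPos H, x.2.2.2 i = false then 1 else 0) :=
        (sum_gaWeight_mul_mul P f p_c p_m _ _).symm
    _ ≤ matchProb P f p_c p_m H := by
        refine sum_le_sum fun ⟨j₁, j₂, c, e⟩ _ => mul_le_mul_of_nonneg_left ?_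
          (gaWeight_nonneg (fun j => (hf j).le) hpc hpm _)
        rw [gaOffspring_mk]
        exact survivalBound_mul_avoids_le hfix _ _ c e

/-- **Microscopic one-offspring Schema Theorem bound.** In the one-generation genetic
algorithm model (fitness-proportional selection of two independent parents; with
probability `p_c` one-point crossover at a cut point uniform in `{1,…,ℓ−1}`, otherwise a
copy of the first parent; then independent per-bit mutation with probability `p_m`), for
every schema `H` with at least one fixed position, the probability that a single
offspring matches `H` is at least
`p(H,t) · (1 − p_c·d(H)/(ℓ−1)) · (1 − p_m)^{o(H)}`. -/
theorem microscopic_schema_bound {ℓ n : ℕ} (hℓ : 2 ≤ ℓ) (hn : 0 < n)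
    (P : Fin n → Fin ℓ → Bool) (f : (Fin ℓ → Bool) → ℝ)
    (hf : ∀ j : Fin n, 0 < f (P j))
    (p_c p_m : ℝ) (hpc : p_c ∈ Set.Icc (0 : ℝ) 1) (hpm : p_m ∈ Set.Icc (0 : ℝ) 1)
    (H : Fin ℓ → Option Bool) (hfix : (fixedPos H).Nonempty) :
    matchProb P f p_c p_m H ≥
      pSel P f H *
        (1 - p_c * (defLength H hfix : ℝ) / ((ℓ : ℝ) - 1)) *
        (1 - p_m) ^ schemaOrder H :=
  microscopic_schema_bound_general hℓ P f hf p_c p_m hpc hpm H hfix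
end

section
/- Exact Schema Theorem for Genetic Algorithms. Consider one generation with fitness-proportional selection and one-point crossover and no mutation: each offspring is generated by selecting two parents independently by fitness-proportional selection; with probability 1−p_c the offspring is a copy of the first parent; with probability p_c a cut index i is chosen uniformly from {0,…,ℓ−1} and the offspring takes its bits at positions ≤ i from the first parent and its bits at positions > i from the second parent. For a schema H let L(H,i) be the schema obtained from H by replacing all entries at positions > i with `none`, and R(H,i) the schema obtained by replacing all entries at positions ≤ i with `none`. Then the total transmission probability α(H,t), i.e. the probability that a single newly created offspring matches H, equals α(H,t) = (1−p_c)·p(H,t) + (p_c/ℓ)·Σ_{i=0}^{ℓ−1} p(L(H,i),t)·p(R(H,i),t), and consequently E(m(H,t+1)) = n·α(H,t) when generation t+1 consists of n such independently generated offspring. -/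
/-- The random choices used to create one offspring with selection and one-point
crossover only: two parent indices and an optional crossover cut index `i ∈ {0,…,ℓ-1}`
(`none` meaning no crossover, i.e. a copy of the first parent). -/
abbrev XChoice (ℓ n : ℕ) : Type := Fin n × Fin n × Option (Fin ℓ)

/-- The probability of an elementary choice: the parents are selected independently by
fitness-proportional selection; with probability `1 - p_c` no crossover occurs, and with
probability `p_c` a cut index is chosen uniformly from `{0,…,ℓ-1}`. -/
noncomputable def xWeight {ℓ n : ℕ} (P : Fin n → Fin ℓ → Bool)
    (f : (Fin ℓ → Bool) → ℝ) (p_c : ℝ) (x : XChoice ℓ n) : ℝ :=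
  selProb P f x.1 * selProb P f x.2.1 *
    (match x.2.2 with
      | none => 1 - p_c
      | some _ => p_c / (ℓ : ℝ))

/-- The offspring produced by an elementary choice: a copy of the first parent if no
crossover occurs; otherwise, with cut index `i`, the bits at positions `≤ i` come from
the first parent and those at positions `> i` from the second parent. -/
def xOffspring {ℓ n : ℕ} (P : Fin n → Fin ℓ → Bool) (x : XChoice ℓ n) :
    Fin ℓ → Bool :=
  match x.2.2 with
  | none => P x.1
  | some i => fun j => if (j : ℕ) ≤ (i : ℕ) then P x.1 j else P x.2.1 j

/-- `α(H,t)`: the total transmission probability of `H`, i.e. the probability that a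
single newly created offspring matches `H`. -/
noncomputable def alpha {ℓ n : ℕ} (P : Fin n → Fin ℓ → Bool)
    (f : (Fin ℓ → Bool) → ℝ) (p_c : ℝ) (H : Fin ℓ → Option Bool) : ℝ :=
  ∑ x : XChoice ℓ n,
    xWeight P f p_c x * (if SchemaMatches (xOffspring P x) H then 1 else 0)

/-- `L(H,i)`: the schema obtained from `H` by replacing all entries at positions `> i`
with `none`. -/
def truncL {ℓ : ℕ} (H : Fin ℓ → Option Bool) (i : ℕ) : Fin ℓ → Option Bool :=
  fun j => if (j : ℕ) ≤ i then H j else none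

/-- `R(H,i)`: the schema obtained from `H` by replacing all entries at positions `≤ i`
with `none`. -/
def truncR {ℓ : ℕ} (H : Fin ℓ → Option Bool) (i : ℕ) : Fin ℓ → Option Bool :=
  fun j => if (j : ℕ) ≤ i then none else H j

/-- `E(m(H,t+1))`: the expected number of offspring matching `H` when generation `t+1`
consists of `n` independently created offspring, computed over the product space of all
the random choices. -/
noncomputable def xExpCount {ℓ n : ℕ} (P : Fin n → Fin ℓ → Bool)
    (f : (Fin ℓ → Bool) → ℝ) (p_c : ℝ) (H : Fin ℓ → Option Bool) : ℝ :=
  ∑ ω : Fin n → XChoice ℓ n,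
    (∏ i, xWeight P f p_c (ω i)) *
      ((Finset.univ.filter (fun i : Fin n => SchemaMatches (xOffspring P (ω i)) H)).card : ℝ)

/-! Split on the crossover event. Without crossover the offspring is the first parent, which
matches `H` with probability `p(H,t)`; with cut `i` it matches `H` exactly when the first parent
matches `L(H,i)` and the second matches `R(H,i)`, and the two parents are selected
independently. The expected count is the sum of `n` marginal probabilities, each equal to
`α(H,t)` because the weights of the other offspring's choices sum to one. -/

open Finset

section IndependentTrials

variable {ι X R : Type*} [Fintype ι] [DecidableEq ι] [Fintype X] [CommSemiring R]

theorem sum_prod_mul_apply (w : X → R) (hw : ∑ x, w x = 1) (g : X → R) (k : ι) :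
    ∑ ω : ι → X, (∏ i, w (ω i)) * g (ω k) = ∑ x, w x * g x := by
  have hfactor (ω : ι → X) :
      (∏ i, w (ω i)) * g (ω k) = ∏ i, w (ω i) * if i = k then g (ω i) else 1 := by
    rw [prod_mul_distrib, prod_ite_eq' univ k, if_pos (mem_univ k)]
  have hmarginal (i : ι) :
      ∑ x, w x * (if i = k then g x else 1) = if i = k then ∑ x, w x * g x else 1 := by
    split_ifs
    · rfl
    · simp only [mul_one, hw]
  simp only [hfactor]
  rw [← Fintype.prod_sum (fun i x => w x * if i = k then g x else 1),
    Fintype.prod_congr _ _ hmarginal, prod_ite_eq' univ k, if_pos (mem_univ k)]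

theorem sum_prod_mul_card_filter (w : X → R) (hw : ∑ x, w x = 1) (p : X → Prop)
    [DecidablePred p] :
    ∑ ω : ι → X, (∏ i, w (ω i)) * (#{i | p (ω i)} : R) =
      Fintype.card ι * ∑ x, w x * if p x then 1 else 0 := by
  simp_rw [natCast_card_filter, mul_sum]
  rw [sum_comm]
  simp only [sum_prod_mul_apply w hw (fun x => if p x then 1 else 0), sum_const, card_univ,
    nsmul_eq_mul, mul_sum]

end IndependentTrials

theorem schemaMatches_crossover_iff {ℓ : ℕ} (A B : Fin ℓ → Bool) (H : Fin ℓ → Option Bool)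
    (i : ℕ) :
    SchemaMatches (fun j => if (j : ℕ) ≤ i then A j else B j) H ↔
      SchemaMatches A (truncL H i) ∧ SchemaMatches B (truncR H i) := by
  simp only [SchemaMatches, truncL, truncR, ← forall_and]
  refine forall_congr' fun j => ?_
  by_cases hj : (j : ℕ) ≤ i <;> simp [hj]

section Selection

variable {ℓ n : ℕ} (P : Fin n → Fin ℓ → Bool) (f : (Fin ℓ → Bool) → ℝ)

theorem totalFit_pos (hn : 0 < n) (hf : ∀ j, 0 < f (P j)) : 0 < totalFit P f :=
  sum_pos (fun j _ => hf j) ⟨⟨0, hn⟩, mem_univ _⟩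

theorem sum_selProb_eq_one (h : totalFit P f ≠ 0) : ∑ j, selProb P f j = 1 := by
  simp only [selProb, ← sum_div]
  exact div_self h

theorem pSel_eq_sum_mul_ite (K : Fin ℓ → Option Bool) :
    pSel P f K = ∑ j, selProb P f j * if SchemaMatches (P j) K then 1 else 0 := by
  simp only [pSel, matchSet, sum_filter, mul_ite, mul_one, mul_zero]

end Selection

section Transmission

variable {ℓ n : ℕ} (P : Fin n → Fin ℓ → Bool) (f : (Fin ℓ → Bool) → ℝ) (p_c : ℝ)

theorem sum_xWeight (hℓ : 0 < ℓ) (hsel : ∑ j, selProb P f j = 1) :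
    ∑ x, xWeight P f p_c x = 1 := by
  have hcut : (1 - p_c) + ∑ _i : Fin ℓ, p_c / ℓ = 1 := by
    rw [sum_const, card_univ, Fintype.card_fin, nsmul_eq_mul, mul_div_cancel₀ _ (by positivity)]
    ring
  simp only [Fintype.sum_prod_type, Fintype.sum_option, xWeight, ← mul_sum, hcut, hsel,
    mul_one]

theorem sum_selProb_mul_copy (hsel : ∑ j, selProb P f j = 1) (H : Fin ℓ → Option Bool) :
    ∑ a, ∑ b, selProb P f a * selProb P f b *
      (if SchemaMatches (xOffspring P (a, b, none)) H then 1 else 0) = pSel P f H := by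
  calc _ = (∑ a, selProb P f a * if SchemaMatches (P a) H then 1 else 0) *
        ∑ b, selProb P f b := by
        rw [sum_mul_sum]
        exact sum_congr rfl fun a _ => sum_congr rfl fun b _ => mul_right_comm _ _ _
    _ = pSel P f H := by rw [hsel, mul_one, pSel_eq_sum_mul_ite]

theorem sum_selProb_mul_crossover (H : Fin ℓ → Option Bool) (i : Fin ℓ) :
    ∑ a, ∑ b, selProb P f a * selProb P f b *
      (if SchemaMatches (xOffspring P (a, b, some i)) H then 1 else 0) =
        pSel P f (truncL H i) * pSel P f (truncR H i) := by
  rw [pSel_eq_sum_mul_ite, pSel_eq_sum_mul_ite, sum_mul_sum]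
  refine sum_congr rfl fun a _ => sum_congr rfl fun b _ => ?_
  rw [xOffspring, if_congr (schemaMatches_crossover_iff (P a) (P b) H i) rfl rfl, ite_and,
    ← boole_mul]
  ring

theorem alpha_eq_pSel_add_crossover (hsel : ∑ j, selProb P f j = 1) (H : Fin ℓ → Option Bool) :
    alpha P f p_c H =
      (1 - p_c) * pSel P f H +
        p_c / ℓ * ∑ i ∈ range ℓ, pSel P f (truncL H i) * pSel P f (truncR H i) := by
  rw [← sum_selProb_mul_copy P f hsel H, ← Fin.sum_univ_eq_sum_range]
  simp only [← sum_selProb_mul_crossover P f H]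
  rw [alpha]
  simp only [Fintype.sum_prod_type, Fintype.sum_option, xWeight, sum_add_distrib, mul_sum]
  rw [sum_comm_cycle]
  congr 1 <;> simp only [mul_assoc, mul_left_comm (1 - p_c), mul_left_comm (p_c / ℓ)]

end Transmission

theorem exact_schema_theorem_general {ℓ n : ℕ} (hℓ : 0 < ℓ) (hn : 0 < n)
    (P : Fin n → Fin ℓ → Bool) (f : (Fin ℓ → Bool) → ℝ)
    (hf : ∀ j : Fin n, 0 < f (P j))
    (p_c : ℝ)
    (H : Fin ℓ → Option Bool) :
    alpha P f p_c H =
      (1 - p_c) * pSel P f H +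
        p_c / (ℓ : ℝ) *
          ∑ i ∈ Finset.range ℓ, pSel P f (truncL H i) * pSel P f (truncR H i) ∧
    xExpCount P f p_c H = (n : ℝ) * alpha P f p_c H := by
  have hsel : ∑ j, selProb P f j = 1 := sum_selProb_eq_one P f (totalFit_pos P f hn hf).ne'
  refine ⟨alpha_eq_pSel_add_crossover P f p_c hsel H, ?_⟩
  rw [xExpCount, sum_prod_mul_card_filter _ (sum_xWeight P f p_c hℓ hsel)
    (fun x => SchemaMatches (xOffspring P x) H), Fintype.card_fin, alpha]

/-- **Exact Schema Theorem for Genetic Algorithms.** With fitness-proportional selection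
and one-point crossover (probability `p_c`, cut index uniform in `{0,…,ℓ−1}`) and no
mutation, the total transmission probability satisfies
`α(H,t) = (1−p_c)·p(H,t) + (p_c/ℓ)·Σ_{i=0}^{ℓ−1} p(L(H,i),t)·p(R(H,i),t)`,
and consequently `E(m(H,t+1)) = n·α(H,t)`. -/
theorem exact_schema_theorem {ℓ n : ℕ} (hℓ : 0 < ℓ) (hn : 0 < n)
    (P : Fin n → Fin ℓ → Bool) (f : (Fin ℓ → Bool) → ℝ)
    (hf : ∀ j : Fin n, 0 < f (P j))
    (p_c : ℝ) (hpc : p_c ∈ Set.Icc (0 : ℝ) 1)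
    (H : Fin ℓ → Option Bool) :
    alpha P f p_c H =
      (1 - p_c) * pSel P f H +
        p_c / (ℓ : ℝ) *
          ∑ i ∈ Finset.range ℓ, pSel P f (truncL H i) * pSel P f (truncR H i) ∧
    xExpCount P f p_c H = (n : ℝ) * alpha P f p_c H :=
  exact_schema_theorem_general hℓ hn P f hf p_c H
end
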